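/- arXiv:1612.06654 — 3 statements merged into one kernel-verified Lean document; each statement's English description precedes it below -/
import Mathlib

section
/- With the setup of the explicit ODE solution (U convex decreasing C² vanishing at infinity, V the solution of (σ²/2)V'' + μV' − (λ+δ)V + λU = 0 with V'(b) = −1 and V(∞) = 0), one has V(b) = (1/A)(1 + (2λ/σ²)∫_b^∞ U(y) e^{Ã(b−y)} dy); in particular V(x) > 0 for all x ≥ b. -/
open Filter Set
open Topology Real MeasureTheory

/-!
Since `A - Ã = 2μ/σ²` and `A Ã = 2(λ+δ)/σ²`, the operator `(σ²/2)D² + μD - (λ+δ)` factors as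
`(σ²/2)(D - Ã)(D + A)`. Hence `H x = e^{Ã(b-x)} (V' + A V)(x)` has derivative
`-(2λ/σ²) U(x) e^{Ã(b-x)} ≤ 0`, so `H` is antitone. If `H` stayed eventually above some `ε > 0`
(or below `-ε`), then `V' + A V = e^{Ã(x-b)} H` would tend to `±∞`, hence so would `V'`,
contradicting `V → 0`. Therefore `H ≥ 0` and `H → 0`, so integrating `H'` over `(b, ∞)` gives
`A V(b) - 1 = H(b) = (2λ/σ²) ∫_b^∞ U(y) e^{Ã(b-y)} dy`. Finally `V' + A V ≥ 0` makes `e^{Ax} V`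
nondecreasing on `[b, ∞)`, starting from `V(b) ≥ 1/A > 0`.
-/

lemma monotoneOn_Ici_of_hasDerivAt_nonneg {f f' : ℝ → ℝ} {b : ℝ}
    (hf : ∀ x ∈ Ici b, HasDerivAt f (f' x) x) (hf' : ∀ x ∈ Ici b, 0 ≤ f' x) :
    MonotoneOn f (Ici b) :=
  monotoneOn_of_hasDerivWithinAt_nonneg (convex_Ici b)
    (fun x hx => (hf x hx).continuousAt.continuousWithinAt)
    (fun x hx => (hf x (interior_subset hx)).hasDerivWithinAt)
    (fun x hx => hf' x (interior_subset hx))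

lemma antitoneOn_Ici_of_hasDerivAt_nonpos {f f' : ℝ → ℝ} {b : ℝ}
    (hf : ∀ x ∈ Ici b, HasDerivAt f (f' x) x) (hf' : ∀ x ∈ Ici b, f' x ≤ 0) :
    AntitoneOn f (Ici b) :=
  antitoneOn_of_hasDerivWithinAt_nonpos (convex_Ici b)
    (fun x hx => (hf x hx).continuousAt.continuousWithinAt)
    (fun x hx => (hf x (interior_subset hx)).hasDerivWithinAt)
    (fun x hx => hf' x (interior_subset hx))

lemma tendsto_atTop_of_eventually_le_deriv {f f' : ℝ → ℝ} {c : ℝ} (hc : 0 < c)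
    (hf : ∀ᶠ x in atTop, HasDerivAt f (f' x) x) (hf' : ∀ᶠ x in atTop, c ≤ f' x) :
    Tendsto f atTop atTop := by
  obtain ⟨M, hM⟩ := (hf.and hf').exists_forall_of_atTop
  have hmono : MonotoneOn (fun x => f x - c * x) (Ici M) :=
    monotoneOn_Ici_of_hasDerivAt_nonneg
      (fun x hx => (hM x hx).1.sub ((hasDerivAt_id x).const_mul c))
      (fun x hx => by linarith [(hM x hx).2])
  have hlin : Tendsto (fun x => f M - c * M + c * x) atTop atTop :=
    tendsto_atTop_add_const_left _ _ (tendsto_id.const_mul_atTop hc)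
  refine tendsto_atTop_mono' _ ?_ hlin
  filter_upwards [eventually_ge_atTop M] with x hx
  linarith [hmono self_mem_Ici hx hx]

lemma not_tendsto_atTop_deriv_add_mul {V V' : ℝ → ℝ} (A : ℝ) (hV : Tendsto V atTop (𝓝 0))
    (hV' : ∀ᶠ x in atTop, HasDerivAt V (V' x) x) :
    ¬ Tendsto (fun x => V' x + A * V x) atTop atTop := by
  intro h
  have hderiv : Tendsto V' atTop atTop := by
    simpa using h.atTop_add (hV.const_mul A).neg
  exact not_tendsto_nhds_of_tendsto_atTop
    (tendsto_atTop_of_eventually_le_deriv one_pos hV' (hderiv.eventually_ge_atTop 1)) 0 hV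

section IntegratingFactor

variable {V V' H : ℝ → ℝ} {A a b : ℝ}

lemma not_eventually_le_of_deriv_add_mul_eq (ha : 0 < a) (hV : Tendsto V atTop (𝓝 0))
    (hV' : ∀ᶠ x in atTop, HasDerivAt V (V' x) x)
    (hH : ∀ᶠ x in atTop, V' x + A * V x = exp (a * (x - b)) * H x) {ε : ℝ} (hε : 0 < ε) :
    ¬ ∀ᶠ x in atTop, ε ≤ H x := by
  intro hεH
  have hexp : Tendsto (fun x => exp (a * (x - b)) * ε) atTop atTop :=
    (tendsto_exp_atTop.comp ((tendsto_atTop_add_const_right _ (-b) tendsto_id).const_mul_atTop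
      ha)).atTop_mul_const hε
  refine not_tendsto_atTop_deriv_add_mul A hV hV' (tendsto_atTop_mono' _ ?_ hexp)
  filter_upwards [hH, hεH] with x hx hxε
  rw [hx]
  exact mul_le_mul_of_nonneg_left hxε (exp_pos _).le

lemma nonneg_of_deriv_add_mul_eq (ha : 0 < a) (hV : Tendsto V atTop (𝓝 0))
    (hV' : ∀ᶠ x in atTop, HasDerivAt V (V' x) x)
    (hH : ∀ᶠ x in atTop, V' x + A * V x = exp (a * (x - b)) * H x)
    (hanti : AntitoneOn H (Ici b)) : ∀ x ∈ Ici b, 0 ≤ H x := by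
  intro x₀ hx₀
  by_contra! hneg
  refine not_eventually_le_of_deriv_add_mul_eq (V := fun x => -V x) (V' := fun x => -V' x)
    (H := fun x => -H x) (A := A) (b := b) ha (by simpa using hV.neg)
    (hV'.mono fun x hx => hx.neg) ?_ (neg_pos.2 hneg) ?_
  · filter_upwards [hH] with x hx
    linear_combination -hx
  · filter_upwards [eventually_ge_atTop x₀] with x hx
    simpa using hanti hx₀ (mem_Ici.2 (le_trans hx₀ hx)) hx

lemma tendsto_zero_of_deriv_add_mul_eq (ha : 0 < a) (hV : Tendsto V atTop (𝓝 0))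
    (hV' : ∀ᶠ x in atTop, HasDerivAt V (V' x) x)
    (hH : ∀ᶠ x in atTop, V' x + A * V x = exp (a * (x - b)) * H x)
    (hanti : AntitoneOn H (Ici b)) : Tendsto H atTop (𝓝 0) := by
  refine tendsto_order.2 ⟨fun ε hε => ?_, fun ε hε => ?_⟩
  · filter_upwards [eventually_ge_atTop b] with x hx
    exact hε.trans_le (nonneg_of_deriv_add_mul_eq ha hV hV' hH hanti x hx)
  · obtain ⟨x₀, hx₀, hHx₀⟩ : ∃ x₀ ≥ b, H x₀ < ε := by
      have := not_eventually.1 (not_eventually_le_of_deriv_add_mul_eq ha hV hV' hH hε)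
      obtain ⟨x, hx, hHx⟩ := (this.and_eventually (eventually_ge_atTop b)).exists
      exact ⟨x, hHx, not_le.1 hx⟩
    filter_upwards [eventually_ge_atTop x₀] with x hx
    exact (hanti (mem_Ici.2 hx₀) (mem_Ici.2 (hx₀.trans hx)) hx).trans_lt hHx₀

end IntegratingFactor

lemma hasDerivAt_exp_mul_deriv_add_mul {V V' : ℝ → ℝ} {V'' g a p q A At b x : ℝ} (ha : a ≠ 0)
    (hsum : a * (A - At) = p) (hprod : a * (A * At) = q)
    (hV : HasDerivAt V (V' x) x) (hV' : HasDerivAt V' V'' x)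
    (hode : a * V'' + p * V' x - q * V x + g = 0) :
    HasDerivAt (fun y => exp (At * (b - y)) * (V' y + A * V y))
      (-(g / a) * exp (At * (b - x))) x := by
  have hexp : HasDerivAt (fun y => exp (At * (b - y))) (-At * exp (At * (b - x))) x := by
    simpa [mul_comm] using ((hasDerivAt_id x).const_sub b |>.const_mul At).exp
  have hcoef : g / a = -(V'' + (A - At) * V' x - A * At * V x) := by
    rw [← hsum, ← hprod] at hode
    field_simp
    linear_combination hode
  refine (hexp.mul (hV'.add (hV.const_mul A))).congr_deriv ?_
  rw [hcoef, Pi.add_apply]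
  ring

lemma roots_pos_and_vieta {σ μ κ ψ A At : ℝ} (hσ : σ ≠ 0) (hκ : 0 < κ)
    (hψ : ψ = √(μ ^ 2 + 2 * σ ^ 2 * κ)) (hA : A = (μ + ψ) / σ ^ 2)
    (hAt : At = (-μ + ψ) / σ ^ 2) :
    0 < A ∧ 0 < At ∧ σ ^ 2 / 2 * (A - At) = μ ∧ σ ^ 2 / 2 * (A * At) = κ := by
  have hσ2 : 0 < σ ^ 2 := by positivity
  have hψsq : ψ ^ 2 = μ ^ 2 + 2 * σ ^ 2 * κ := by rw [hψ, sq_sqrt (by positivity)]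
  have hμψ : |μ| < ψ := by
    rw [hψ, ← sqrt_sq_eq_abs]
    exact sqrt_lt_sqrt (sq_nonneg μ) (lt_add_of_pos_right _ (by positivity))
  obtain ⟨hμψ₁, hμψ₂⟩ := abs_lt.1 hμψ
  subst hA hAt
  refine ⟨div_pos (by linarith) hσ2, div_pos (by linarith) hσ2, by field_simp; ring, ?_⟩
  field_simp
  linear_combination hψsq

lemma pos_of_deriv_add_mul_nonneg {V V' : ℝ → ℝ} {A b : ℝ}
    (hV : ∀ x ∈ Ici b, HasDerivAt V (V' x) x) (hV' : ∀ x ∈ Ici b, 0 ≤ V' x + A * V x)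
    (hVb : 0 < V b) : ∀ x ∈ Ici b, 0 < V x := by
  have hmono : MonotoneOn (fun x => exp (A * x) * V x) (Ici b) :=
    monotoneOn_Ici_of_hasDerivAt_nonneg (f' := fun x => exp (A * x) * (V' x + A * V x))
      (fun x hx => (((hasDerivAt_id x).const_mul A).exp.mul (hV x hx)).congr_deriv
        (by simp only [id]; ring))
      (fun x hx => mul_nonneg (exp_pos _).le (hV' x hx))
  intro x hx
  exact pos_of_mul_pos_right ((mul_pos (exp_pos _) hVb).trans_le (hmono self_mem_Ici hx hx))
    (exp_pos _).le

theorem boundary_value_and_positivity_general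
    (σ μ lam δ b : ℝ) (hσ : 0 < σ) (hlam : 0 < lam) (hδ : -lam < δ)
    (hb : 0 ≤ b)
    (U : ℝ → ℝ)
    (hUpos : ∀ x ∈ Ici (0 : ℝ), 0 ≤ U x)
    (ψ A At : ℝ)
    (hψ : ψ = Real.sqrt (μ ^ 2 + 2 * σ ^ 2 * (δ + lam)))
    (hA : A = (μ + ψ) / σ ^ 2)
    (hAt : At = (-μ + ψ) / σ ^ 2)
    (V V' V'' : ℝ → ℝ)
    (hd1 : ∀ x ∈ Ici (0 : ℝ), HasDerivAt V (V' x) x)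
    (hd2 : ∀ x ∈ Ici (0 : ℝ), HasDerivAt V' (V'' x) x)
    (hODE : ∀ x ∈ Ici (0 : ℝ),
      σ ^ 2 / 2 * V'' x + μ * V' x - (lam + δ) * V x + lam * U x = 0)
    (hVb : V' b = -1)
    (hVlim : Tendsto V atTop (nhds 0)) :
    V b = (1 / A) * (1 + (2 * lam / σ ^ 2) *
        ∫ y in Ioi b, U y * Real.exp (At * (b - y))) ∧
    ∀ x, b ≤ x → 0 < V x := by
  obtain ⟨hA0, hAt0, hsum, hprod⟩ :=
    roots_pos_and_vieta hσ.ne' (by linarith : 0 < δ + lam) hψ hA hAt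
  set H : ℝ → ℝ := fun x => exp (At * (b - x)) * (V' x + A * V x) with hH
  set H' : ℝ → ℝ := fun x => -(lam * U x / (σ ^ 2 / 2)) * exp (At * (b - x)) with hH'
  have hHderiv : ∀ x ∈ Ici b, HasDerivAt H (H' x) x := fun x hx =>
    hasDerivAt_exp_mul_deriv_add_mul (by positivity) hsum (by rw [hprod]; ring)
      (hd1 x (hb.trans hx)) (hd2 x (hb.trans hx)) (hODE x (hb.trans hx))
  have hH'_nonpos : ∀ x ∈ Ici b, H' x ≤ 0 := fun x hx => by
    have := hUpos x (hb.trans hx)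
    simp only [hH', neg_mul, neg_nonpos]
    positivity
  have hVH : ∀ x, V' x + A * V x = exp (At * (x - b)) * H x := fun x => by
    rw [hH, ← mul_assoc, ← exp_add, ← mul_add, sub_add_sub_cancel, sub_self, mul_zero, exp_zero,
      one_mul]
  have hV' : ∀ᶠ x in atTop, HasDerivAt V (V' x) x := (eventually_ge_atTop 0).mono hd1
  have hanti := antitoneOn_Ici_of_hasDerivAt_nonpos hHderiv hH'_nonpos
  have hHb : H b = A * V b - 1 := by simp only [hH, hVb, sub_self, mul_zero, exp_zero]; ring
  have hVbA : 2 * lam / σ ^ 2 * ∫ y in Ioi b, U y * exp (At * (b - y)) = A * V b - 1 := by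
    have hint := integral_Ioi_of_hasDerivAt_of_nonpos' hHderiv
      (fun x hx => hH'_nonpos x (Ioi_subset_Ici_self hx))
      (tendsto_zero_of_deriv_add_mul_eq hAt0 hVlim hV' (.of_forall hVH) hanti)
    have hintH' : ∫ y in Ioi b, H' y
        = -(2 * lam / σ ^ 2 * ∫ y in Ioi b, U y * exp (At * (b - y))) := by
      rw [← integral_const_mul, ← integral_neg]
      congr 1 with y
      simp only [hH']
      field_simp
    linarith
  have hHnonneg := nonneg_of_deriv_add_mul_eq hAt0 hVlim hV' (.of_forall hVH) hanti
  constructor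
  · rw [hVbA]
    field_simp
    ring
  · refine pos_of_deriv_add_mul_nonneg (A := A) (fun x hx => hd1 x (hb.trans hx))
      (fun x hx => ?_) (pos_of_mul_pos_right (by linarith [hHnonneg b self_mem_Ici]) hA0.le)
    rw [hVH]
    exact mul_nonneg (exp_pos _).le (hHnonneg x hx)

theorem boundary_value_and_positivity
    (σ μ lam δ b : ℝ) (hσ : 0 < σ) (hμ : 0 < μ) (hlam : 0 < lam) (hδ : -lam < δ)
    (hb : 0 ≤ b)
    (U : ℝ → ℝ)
    (hUpos : ∀ x ∈ Ici (0 : ℝ), 0 ≤ U x)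
    (hUconv : ConvexOn ℝ (Ici (0 : ℝ)) U)
    (hUdec : AntitoneOn U (Ici (0 : ℝ)))
    (hUC2 : ContDiffOn ℝ 2 U (Ici (0 : ℝ)))
    (hUlim : Tendsto U atTop (nhds 0))
    (ψ A At : ℝ)
    (hψ : ψ = Real.sqrt (μ ^ 2 + 2 * σ ^ 2 * (δ + lam)))
    (hA : A = (μ + ψ) / σ ^ 2)
    (hAt : At = (-μ + ψ) / σ ^ 2)
    (V V' V'' : ℝ → ℝ)
    (hd1 : ∀ x ∈ Ici (0 : ℝ), HasDerivAt V (V' x) x)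
    (hd2 : ∀ x ∈ Ici (0 : ℝ), HasDerivAt V' (V'' x) x)
    (hcont : ContinuousOn V'' (Ici (0 : ℝ)))
    (hODE : ∀ x ∈ Ici (0 : ℝ),
      σ ^ 2 / 2 * V'' x + μ * V' x - (lam + δ) * V x + lam * U x = 0)
    (hVb : V' b = -1)
    (hVlim : Tendsto V atTop (nhds 0)) :
    V b = (1 / A) * (1 + (2 * lam / σ ^ 2) *
        ∫ y in Ioi b, U y * Real.exp (At * (b - y))) ∧
    ∀ x, b ≤ x → 0 < V x :=
  boundary_value_and_positivity_general σ μ lam δ b hσ hlam hδ hb U hUpos ψ A At hψ hA hAt V V' V''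
    hd1 hd2 hODE hVb hVlim
end

section
/- Comparison principle: let v, w : [0,∞) → ℝ be C² solutions of (σ²/2)v'' + μv' − cv + h₁ = 0 and (σ²/2)w'' + μw' − cw + h₂ = 0 on [0,∞) with c > 0, h₂ ≥ h₁ ≥ 0 continuous, v'(0) = w'(0) = −1, w(0) > v(0), and v(x), w(x) → 0 as x → ∞. Then w(x) > v(x) for all x ≥ 0. -/
/-!
With `a = σ²/2`, let `r > 0` and `s` be the roots of `a X² + μ X - c`, so that the operator
`a D² + μ D - c` factors as `a (D - s)(D - r)`. For `u = w - v` we get `a u'' + μ u' - c u ≤ 0`,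
`u'(0) = 0` and `u(0) > 0`. The first-order inequality `(D - s) q ≤ 0` for `q = u' - r u`, started
from `q(0) = -r u(0) < 0`, keeps `q` negative; then `e^{-rx} u` is strictly decreasing and tends
to `0`, hence is positive.
-/

open Filter Set Real

theorem hasDerivAt_exp_neg_mul_mul {f : ℝ → ℝ} {f' x : ℝ} (k : ℝ) (hf : HasDerivAt f f' x) :
    HasDerivAt (fun y => exp (-k * y) * f y) (exp (-k * x) * (f' - k * f x)) x := by
  have hexp : HasDerivAt (fun y => exp (-k * y)) (exp (-k * x) * (-k)) x := by
    simpa using ((hasDerivAt_id x).const_mul (-k)).exp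
  exact (hexp.mul hf).congr_deriv (by ring)

section FirstOrder

variable {f f' : ℝ → ℝ} {k x₀ : ℝ}

theorem neg_on_Ici_of_deriv_le_mul (hf : ∀ x ∈ Ici x₀, HasDerivAt f (f' x) x)
    (hle : ∀ x ∈ Ici x₀, f' x ≤ k * f x) (h₀ : f x₀ < 0) : ∀ x ∈ Ici x₀, f x < 0 := by
  have hF : ∀ x ∈ Ici x₀,
      HasDerivAt (fun y => exp (-k * y) * f y) (exp (-k * x) * (f' x - k * f x)) x :=
    fun x hx => hasDerivAt_exp_neg_mul_mul k (hf x hx)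
  have hanti : AntitoneOn (fun y => exp (-k * y) * f y) (Ici x₀) := by
    refine antitoneOn_of_deriv_nonpos (convex_Ici x₀) (HasDerivAt.continuousOn hF)
      (fun x hx => ?_) (fun x hx => ?_) <;> rw [interior_Ici] at hx
    · exact (hF x (Ioi_subset_Ici_self hx)).differentiableAt.differentiableWithinAt
    · rw [(hF x (Ioi_subset_Ici_self hx)).deriv]
      exact mul_nonpos_of_nonneg_of_nonpos (exp_pos _).le
        (sub_nonpos.2 (hle x (Ioi_subset_Ici_self hx)))
  intro x hx
  have hdecr : exp (-k * x) * f x ≤ exp (-k * x₀) * f x₀ := hanti self_mem_Ici hx hx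
  have hneg : exp (-k * x₀) * f x₀ < 0 := mul_neg_of_pos_of_neg (exp_pos _) h₀
  exact neg_of_mul_neg_right (hdecr.trans_lt hneg) (exp_pos _).le

theorem pos_on_Ici_of_deriv_lt_mul_of_tendsto_zero (hk : 0 ≤ k)
    (hf : ∀ x ∈ Ici x₀, HasDerivAt f (f' x) x) (hlt : ∀ x ∈ Ici x₀, f' x < k * f x)
    (hlim : Tendsto f atTop (nhds 0)) : ∀ x ∈ Ici x₀, 0 < f x := by
  set G : ℝ → ℝ := fun y => exp (-k * y) * f y
  have hG : ∀ x ∈ Ici x₀, HasDerivAt G (exp (-k * x) * (f' x - k * f x)) x :=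
    fun x hx => hasDerivAt_exp_neg_mul_mul k (hf x hx)
  have hanti : StrictAntiOn G (Ici x₀) := by
    refine strictAntiOn_of_deriv_neg (convex_Ici x₀) (HasDerivAt.continuousOn hG) fun x hx => ?_
    rw [interior_Ici] at hx
    rw [(hG x (Ioi_subset_Ici_self hx)).deriv]
    exact mul_neg_of_pos_of_neg (exp_pos _) (sub_neg.2 (hlt x (Ioi_subset_Ici_self hx)))
  have hGlim : Tendsto G atTop (nhds 0) := by
    refine squeeze_zero_norm' ?_ (by simpa using hlim.norm)
    filter_upwards [eventually_ge_atTop 0] with y hy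
    rw [norm_mul, Real.norm_of_nonneg (exp_pos _).le]
    exact mul_le_of_le_one_left (norm_nonneg _)
      (exp_le_one_iff.2 (mul_nonpos_of_nonpos_of_nonneg (neg_nonpos.2 hk) hy))
  have hGnonneg : ∀ x ∈ Ici x₀, 0 ≤ G x := fun x hx =>
    le_of_tendsto hGlim <| (eventually_gt_atTop x).mono fun y hy =>
      (hanti hx (mem_Ici.2 (le_trans hx hy.le)) hy).le
  intro x hx
  have hGx : 0 < G x :=
    (hGnonneg (x + 1) (mem_Ici.2 (by linarith [mem_Ici.1 hx]))).trans_lt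
      (hanti hx (mem_Ici.2 (by linarith [mem_Ici.1 hx])) (by linarith))
  exact pos_of_mul_pos_right hGx (exp_pos _).le

end FirstOrder

theorem exists_pos_root_quadratic {a c : ℝ} (b : ℝ) (ha : 0 < a) (hc : 0 < c) :
    ∃ r, 0 < r ∧ a * r ^ 2 + b * r - c = 0 := by
  set D := √(b ^ 2 + 4 * a * c)
  have hD : D ^ 2 = b ^ 2 + 4 * a * c := sq_sqrt (by positivity)
  have hbD : b < D := by nlinarith [sqrt_nonneg (b ^ 2 + 4 * a * c), mul_pos ha hc]
  refine ⟨(-b + D) / (2 * a), div_pos (by linarith) (by positivity), ?_⟩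
  field_simp
  nlinarith [hD]

theorem pos_on_Ici_of_supersolution {a b c x₀ : ℝ} {u u' u'' : ℝ → ℝ} (ha : 0 < a) (hc : 0 < c)
    (hu : ∀ x ∈ Ici x₀, HasDerivAt u (u' x) x) (hu' : ∀ x ∈ Ici x₀, HasDerivAt u' (u'' x) x)
    (hsuper : ∀ x ∈ Ici x₀, a * u'' x + b * u' x - c * u x ≤ 0)
    (hu'₀ : u' x₀ ≤ 0) (hu₀ : 0 < u x₀) (hlim : Tendsto u atTop (nhds 0)) :
    ∀ x ∈ Ici x₀, 0 < u x := by
  obtain ⟨r, hr, hroot⟩ := exists_pos_root_quadratic b ha hc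
  set s := -b / a - r
  have has : a * s = -b - a * r := by simp only [s]; field_simp
  -- `a (D - s)(D - r) = a D² + b D - c`, applied to `u`
  have hfactor : ∀ x, a * ((u'' x - r * u' x) - s * (u' x - r * u x)) =
      a * u'' x + b * u' x - c * u x := fun x => by
    linear_combination (r * u x - u' x) * has - u x * hroot
  have hq : ∀ x ∈ Ici x₀, u' x - r * u x < 0 := by
    refine neg_on_Ici_of_deriv_le_mul (k := s) (fun x hx => (hu' x hx).sub ((hu x hx).const_mul r))
      (fun x hx => ?_) (by linarith [mul_pos hr hu₀])
    have hL := (hfactor x).trans_le (hsuper x hx)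
    exact sub_nonpos.1 (nonpos_of_mul_nonpos_right hL ha)
  exact pos_on_Ici_of_deriv_lt_mul_of_tendsto_zero hr.le hu (fun x hx => by linarith [hq x hx]) hlim

theorem comparison_principle_general
    (σ μ c : ℝ) (hσ : 0 < σ) (hc : 0 < c)
    (h₁ h₂ : ℝ → ℝ)
    (hord : ∀ x ∈ Ici (0 : ℝ), 0 ≤ h₁ x ∧ h₁ x ≤ h₂ x)
    (v v' v'' w w' w'' : ℝ → ℝ)
    (hvd1 : ∀ x ∈ Ici (0 : ℝ), HasDerivAt v (v' x) x)
    (hvd2 : ∀ x ∈ Ici (0 : ℝ), HasDerivAt v' (v'' x) x)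
    (hwd1 : ∀ x ∈ Ici (0 : ℝ), HasDerivAt w (w' x) x)
    (hwd2 : ∀ x ∈ Ici (0 : ℝ), HasDerivAt w' (w'' x) x)
    (hvODE : ∀ x ∈ Ici (0 : ℝ), σ ^ 2 / 2 * v'' x + μ * v' x - c * v x + h₁ x = 0)
    (hwODE : ∀ x ∈ Ici (0 : ℝ), σ ^ 2 / 2 * w'' x + μ * w' x - c * w x + h₂ x = 0)
    (hv0 : v' 0 = -1) (hw0 : w' 0 = -1) (hgt : v 0 < w 0)
    (hvlim : Tendsto v atTop (nhds 0)) (hwlim : Tendsto w atTop (nhds 0)) :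
    ∀ x ∈ Ici (0 : ℝ), v x < w x := by
  have hsuper : ∀ x ∈ Ici (0 : ℝ),
      σ ^ 2 / 2 * (w'' x - v'' x) + μ * (w' x - v' x) - c * (w x - v x) ≤ 0 := fun x hx => by
    linarith [hvODE x hx, hwODE x hx, (hord x hx).2]
  have hpos := pos_on_Ici_of_supersolution (u := fun x => w x - v x) (by positivity) hc
    (fun x hx => (hwd1 x hx).sub (hvd1 x hx)) (fun x hx => (hwd2 x hx).sub (hvd2 x hx)) hsuper
    (by rw [hv0, hw0, sub_self]) (sub_pos.2 hgt) (by simpa using hwlim.sub hvlim)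
  exact fun x hx => sub_pos.1 (hpos x hx)

theorem comparison_principle
    (σ μ c : ℝ) (hσ : 0 < σ) (hμ : 0 < μ) (hc : 0 < c)
    (h₁ h₂ : ℝ → ℝ)
    (hh₁ : ContinuousOn h₁ (Ici (0 : ℝ))) (hh₂ : ContinuousOn h₂ (Ici (0 : ℝ)))
    (hord : ∀ x ∈ Ici (0 : ℝ), 0 ≤ h₁ x ∧ h₁ x ≤ h₂ x)
    (v v' v'' w w' w'' : ℝ → ℝ)
    (hvd1 : ∀ x ∈ Ici (0 : ℝ), HasDerivAt v (v' x) x)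
    (hvd2 : ∀ x ∈ Ici (0 : ℝ), HasDerivAt v' (v'' x) x)
    (hwd1 : ∀ x ∈ Ici (0 : ℝ), HasDerivAt w (w' x) x)
    (hwd2 : ∀ x ∈ Ici (0 : ℝ), HasDerivAt w' (w'' x) x)
    (hvc : ContinuousOn v'' (Ici (0 : ℝ))) (hwc : ContinuousOn w'' (Ici (0 : ℝ)))
    (hvODE : ∀ x ∈ Ici (0 : ℝ), σ ^ 2 / 2 * v'' x + μ * v' x - c * v x + h₁ x = 0)
    (hwODE : ∀ x ∈ Ici (0 : ℝ), σ ^ 2 / 2 * w'' x + μ * w' x - c * w x + h₂ x = 0)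
    (hv0 : v' 0 = -1) (hw0 : w' 0 = -1) (hgt : v 0 < w 0)
    (hvlim : Tendsto v atTop (nhds 0)) (hwlim : Tendsto w atTop (nhds 0)) :
    ∀ x ∈ Ici (0 : ℝ), v x < w x :=
  comparison_principle_general σ μ c hσ hc h₁ h₂ hord v v' v'' w w' w'' hvd1 hvd2 hwd1 hwd2 hvODE
    hwODE hv0 hw0 hgt hvlim hwlim
end

section
/- Under the setup of Corollary A.2, the function g(b) := V_b''(b) is given explicitly by g(b) = 2μ/σ² + 2(λ+δ)/(σ²A) + (2λ/σ²)((2(λ+δ)/(Aσ²))∫_0^∞ U(z+b)e^{−zÃ}dz − U(b)), and g is monotonically increasing in b. -/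
/-!
With `W_b := V_b' + A V_b`, the ODE factors as `W_b' = Ã W_b - (2λ/σ²) U`, because `-A` and `Ã`
are the roots of `σ²/2 r² + μ r - (λ + δ)`. Hence `(W_b e^{-Ãx})' = -(2λ/σ²) U e^{-Ãx}` is
integrable, so `W_b e^{-Ãx}` has a limit at `∞`; the limit is `0`, since otherwise `V_b'`, and
with it `V_b`, would tend to `±∞`. Integrating from `b` gives
`-1 + A V_b(b) = (2λ/σ²) ∫_0^∞ U(z + b) e^{-zÃ} dz`, and the ODE at `x = b` turns this into the
formula for `V_b''(b)`. Since `Ã ∫_0^∞ e^{-zÃ} dz = 1`, the bracket in the formula equals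
`Ã ∫_0^∞ (U(z + b) - U(b)) e^{-zÃ} dz`, and the increments `U(z + b) - U(b)` of the convex
function `U` increase with `b`.
-/

open Filter Set MeasureTheory Real Topology

theorem ConvexOn.sub_le_sub_of_le {s : Set ℝ} {f : ℝ → ℝ} (hf : ConvexOn ℝ s f) {x y z : ℝ}
    (hx : x ∈ s) (hyz : y + z ∈ s) (hxy : x ≤ y) (hz : 0 ≤ z) :
    f (x + z) - f x ≤ f (y + z) - f y := by
  rcases hz.eq_or_lt with rfl | hz
  · simp
  have mem : ∀ t ∈ Icc x (y + z), t ∈ s := fun t ht => hf.1.ordConnected.out hx hyz ht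
  have hslope : slope f x (x + z) ≤ slope f y (y + z) :=
    calc slope f x (x + z)
        ≤ slope f x (y + z) :=
          hf.slope_mono hx ⟨mem _ ⟨by linarith, by linarith⟩, by simp [hz.ne']⟩
            ⟨hyz, by simp; linarith⟩ (by linarith)
      _ = slope f (y + z) x := slope_comm _ _ _
      _ ≤ slope f (y + z) y :=
          hf.slope_mono hyz ⟨hx, by simp; linarith⟩
            ⟨mem _ ⟨hxy, by linarith⟩, by simp [hz.ne']⟩ hxy
      _ = slope f y (y + z) := slope_comm _ _ _
  simpa only [slope_def_field, add_sub_cancel_left, div_le_div_iff_of_pos_right hz] using hslope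

theorem integrableOn_exp_neg_mul_Ioi (a : ℝ) {c : ℝ} (hc : 0 < c) :
    IntegrableOn (fun x => exp (-x * c)) (Ioi a) := by
  simpa only [neg_mul, mul_comm c] using exp_neg_integrableOn_Ioi a hc

theorem AntitoneOn.integrableOn_comp_add_mul_exp_neg {U : ℝ → ℝ} {b c : ℝ}
    (hU : AntitoneOn U (Ici 0)) (hc : 0 < c) (hb : 0 ≤ b) (hcont : ContinuousOn U (Ici 0))
    (hpos : ∀ x ∈ Ici (0 : ℝ), 0 ≤ U x) :
    IntegrableOn (fun z => U (z + b) * exp (-z * c)) (Ioi 0) := by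
  have hmaps : MapsTo (· + b) (Ioi 0) (Ici 0) := fun z hz => by
    simp only [mem_Ici]; linarith [mem_Ioi.1 hz]
  refine (integrableOn_exp_neg_mul_Ioi 0 hc).bdd_mul (c := U 0)
    ((hcont.comp (continuous_add_const b).continuousOn hmaps).aestronglyMeasurable
      measurableSet_Ioi)
    ((ae_restrict_iff' measurableSet_Ioi).2 (ae_of_all _ fun z hz => ?_))
  rw [Real.norm_eq_abs, abs_of_nonneg (hpos _ (hmaps hz))]
  exact hU self_mem_Ici (hmaps hz) (hmaps hz)

theorem integral_exp_neg_mul_Ioi_zero {c : ℝ} (hc : 0 < c) :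
    ∫ z in Ioi (0 : ℝ), exp (-z * c) = c⁻¹ := by
  simp_rw [neg_mul, mul_comm _ c, ← neg_mul]
  rw [integral_exp_mul_Ioi (neg_lt_zero.2 hc)]
  simp

theorem monotoneOn_mul_integral_exp_neg_sub {U : ℝ → ℝ} {c : ℝ} (hc : 0 < c)
    (hU : ConvexOn ℝ (Ici 0) U)
    (hint : ∀ b ∈ Ici (0 : ℝ), IntegrableOn (fun z => U (z + b) * exp (-z * c)) (Ioi 0)) :
    MonotoneOn (fun b => c * (∫ z in Ioi (0 : ℝ), U (z + b) * exp (-z * c)) - U b) (Ici 0) := by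
  have hint' : ∀ b ∈ Ici (0 : ℝ),
      IntegrableOn (fun z => (U (z + b) - U b) * exp (-z * c)) (Ioi 0) := fun b hb => by
    simp_rw [sub_mul]
    exact (hint b hb).sub ((integrableOn_exp_neg_mul_Ioi 0 hc).const_mul (U b))
  have hrepr : ∀ b ∈ Ici (0 : ℝ), c * (∫ z in Ioi (0 : ℝ), U (z + b) * exp (-z * c)) - U b =
      c * ∫ z in Ioi (0 : ℝ), (U (z + b) - U b) * exp (-z * c) := by
    intro b hb
    simp_rw [sub_mul]
    rw [integral_sub (hint b hb) ((integrableOn_exp_neg_mul_Ioi 0 hc).const_mul (U b)),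
      integral_const_mul, integral_exp_neg_mul_Ioi_zero hc, mul_sub]
    field_simp
  intro b₁ hb₁ b₂ hb₂ hle
  simp only [hrepr b₁ hb₁, hrepr b₂ hb₂]
  refine mul_le_mul_of_nonneg_left
    (setIntegral_mono_on (hint' b₁ hb₁) (hint' b₂ hb₂) measurableSet_Ioi fun z hz => ?_) hc.le
  have hinc := hU.sub_le_sub_of_le hb₁ (mem_Ici.2 (by linarith [mem_Ici.1 hb₂, mem_Ioi.1 hz]))
    hle (le_of_lt hz)
  rw [add_comm z, add_comm z]
  gcongr

theorem tendsto_atTop_of_hasDerivAt_of_tendsto_atTop {f f' : ℝ → ℝ}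
    (hf : ∀ᶠ x in atTop, HasDerivAt f (f' x) x) (hf' : Tendsto f' atTop atTop) :
    Tendsto f atTop atTop := by
  obtain ⟨x₀, hx₀⟩ := eventually_atTop.1 (hf.and (hf'.eventually_ge_atTop 1))
  have hmono : MonotoneOn (fun x => f x - x) (Ici x₀) := by
    refine monotoneOn_of_hasDerivWithinAt_nonneg (f' := fun x => f' x - 1) (convex_Ici x₀)
      (fun x hx => ((hx₀ x hx).1.sub (hasDerivAt_id x)).continuousAt.continuousWithinAt)
      (fun x hx => ?_) (fun x hx => ?_)
    · rw [interior_Ici] at hx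
      exact ((hx₀ x hx.le).1.sub (hasDerivAt_id x)).hasDerivWithinAt
    · rw [interior_Ici] at hx
      exact sub_nonneg.2 (hx₀ x hx.le).2
  refine tendsto_atTop_mono' _ ?_ (tendsto_atTop_add_const_right _ (f x₀ - x₀) tendsto_id)
  filter_upwards [eventually_ge_atTop x₀] with x hx
  have := hmono self_mem_Ici hx hx
  simp only [id] at this ⊢
  linarith

theorem hasDerivAt_mul_exp_neg {W h : ℝ → ℝ} {c x : ℝ} (hW : HasDerivAt W (c * W x - h x) x) :
    HasDerivAt (fun y => W y * exp (-y * c)) (-(h x * exp (-x * c))) x := by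
  have hexp : HasDerivAt (fun y => exp (-y * c)) (exp (-x * c) * -c) x := by
    simpa using ((hasDerivAt_neg x).mul_const c).exp
  exact (hW.mul hexp).congr_deriv (by ring)

theorem eq_zero_of_tendsto_deriv_add_mul_mul_exp_neg {V V' : ℝ → ℝ} {a c L : ℝ} (hc : 0 < c)
    (hV : ∀ᶠ x in atTop, HasDerivAt V (V' x) x) (hV0 : Tendsto V atTop (𝓝 0))
    (hL : Tendsto (fun x => (V' x + a * V x) * exp (-x * c)) atTop (𝓝 L)) : L = 0 := by
  by_contra hL0
  wlog hpos : 0 < L generalizing V V' L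
  · refine this (V := fun x => -V x) (V' := fun x => -V' x) (L := -L)
      (hV.mono fun x hx => hx.neg) ?_ ?_ (neg_ne_zero.2 hL0)
      (by linarith [lt_of_le_of_ne (not_lt.1 hpos) hL0])
    · simpa using hV0.neg
    · convert hL.neg using 2 with x
      ring
  -- `V' = (V' + a V) e^{-cx} e^{cx} - a V` is forced to `+∞`, so `V` would be too
  have hV' : Tendsto V' atTop atTop := by
    have hgrow := (hL.pos_mul_atTop hpos
      (tendsto_exp_atTop.comp (tendsto_id.atTop_mul_const hc))).atTop_add
      (hV0.const_mul (-a))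
    refine hgrow.congr fun x => ?_
    simp only [Function.comp_apply, id]
    rw [mul_assoc, ← exp_add, show -x * c + x * c = 0 by ring, exp_zero]
    ring
  exact not_tendsto_nhds_of_tendsto_atTop
    (tendsto_atTop_of_hasDerivAt_of_tendsto_atTop hV hV') 0 hV0

theorem deriv_add_mul_eq_integral_of_hasDerivAt {V V' V'' g : ℝ → ℝ} {a b c : ℝ} (hc : 0 < c)
    (hV : ∀ x ∈ Ici b, HasDerivAt V (V' x) x) (hV' : ∀ x ∈ Ici b, HasDerivAt V' (V'' x) x)
    (hode : ∀ x ∈ Ici b, V'' x + a * V' x = c * (V' x + a * V x) - g x)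
    (hg : IntegrableOn (fun z => g (z + b) * exp (-z * c)) (Ioi 0))
    (hV0 : Tendsto V atTop (𝓝 0)) :
    V' b + a * V b = ∫ z in Ioi (0 : ℝ), g (z + b) * exp (-z * c) := by
  have hshift : ∀ z ∈ Ici (0 : ℝ), z + b ∈ Ici b := fun z hz => by
    simpa using mem_Ici.1 hz
  have hF : ∀ z ∈ Ici (0 : ℝ), HasDerivAt (fun y => (V' (y + b) + a * V (y + b)) * exp (-y * c))
      (-(g (z + b) * exp (-z * c))) z := fun z hz =>
    hasDerivAt_mul_exp_neg (W := fun y => V' (y + b) + a * V (y + b)) (h := fun y => g (y + b)) <|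
      (((hV' _ (hshift z hz)).add
      ((hV _ (hshift z hz)).const_mul a)).comp_add_const z b).congr_deriv (hode _ (hshift z hz))
  have hlim := tendsto_limUnder_of_hasDerivAt_of_integrableOn_Ioi
    (fun z hz => hF z (mem_Ici.2 (le_of_lt hz))) hg.neg
  have hL : limUnder atTop (fun y => (V' (y + b) + a * V (y + b)) * exp (-y * c)) = 0 :=
    eq_zero_of_tendsto_deriv_add_mul_mul_exp_neg (V := fun y => V (y + b)) hc
      ((eventually_ge_atTop 0).mono fun z hz => (hV _ (hshift z hz)).comp_add_const z b)
      (hV0.comp (tendsto_atTop_add_const_right _ b tendsto_id)) hlim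
  rw [hL] at hlim
  have := integral_Ioi_of_hasDerivAt_of_tendsto' hF hg.neg hlim
  rw [integral_neg, zero_sub, neg_inj] at this
  simpa using this.symm

theorem characteristic_roots {σ μ κ ψ A At : ℝ} (hσ : 0 < σ) (hκ : 0 < κ)
    (hψ : ψ = √(μ ^ 2 + 2 * σ ^ 2 * κ)) (hA : A = (μ + ψ) / σ ^ 2) (hAt : At = (-μ + ψ) / σ ^ 2) :
    0 < A ∧ 0 < At ∧ (A - At) * σ ^ 2 = 2 * μ ∧ A * At * σ ^ 2 = 2 * κ := by
  have hψμ : |μ| < ψ :=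
    hψ ▸ (lt_sqrt (abs_nonneg μ)).2 (by nlinarith [sq_abs μ, mul_pos (pow_pos hσ 2) hκ])
  have hψsq : ψ ^ 2 = μ ^ 2 + 2 * σ ^ 2 * κ := by rw [hψ, sq_sqrt (by positivity)]
  refine ⟨hA ▸ div_pos (by linarith [neg_abs_le μ]) (by positivity),
    hAt ▸ div_pos (by linarith [le_abs_self μ]) (by positivity), ?_, ?_⟩
  · rw [hA, hAt]; field_simp; ring
  · rw [hA, hAt]; field_simp; linear_combination hψsq

theorem barrier_second_derivative_increasing_general
    (σ μ lam δ : ℝ) (hσ : 0 < σ) (hlam : 0 < lam) (hδ : -lam < δ)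
    (U : ℝ → ℝ)
    (hUpos : ∀ x ∈ Ici (0 : ℝ), 0 ≤ U x)
    (hUconv : ConvexOn ℝ (Ici (0 : ℝ)) U)
    (hUdec : AntitoneOn U (Ici (0 : ℝ)))
    (hUC2 : ContDiffOn ℝ 2 U (Ici (0 : ℝ)))
    (ψ A At : ℝ)
    (hψ : ψ = Real.sqrt (μ ^ 2 + 2 * σ ^ 2 * (δ + lam)))
    (hA : A = (μ + ψ) / σ ^ 2)
    (hAt : At = (-μ + ψ) / σ ^ 2)
    (V V' V'' : ℝ → ℝ → ℝ)
    (hd1 : ∀ b ∈ Ici (0 : ℝ), ∀ x ∈ Ici (0 : ℝ), HasDerivAt (V b) (V' b x) x)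
    (hd2 : ∀ b ∈ Ici (0 : ℝ), ∀ x ∈ Ici (0 : ℝ), HasDerivAt (V' b) (V'' b x) x)
    (hODE : ∀ b ∈ Ici (0 : ℝ), ∀ x ∈ Ici (0 : ℝ),
      σ ^ 2 / 2 * V'' b x + μ * V' b x - (lam + δ) * V b x + lam * U x = 0)
    (hVb : ∀ b ∈ Ici (0 : ℝ), V' b b = -1)
    (hVlim : ∀ b ∈ Ici (0 : ℝ), Tendsto (V b) atTop (nhds 0)) :
    (∀ b ∈ Ici (0 : ℝ),
      V'' b b = 2 * μ / σ ^ 2 + 2 * (lam + δ) / (σ ^ 2 * A)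
        + (2 * lam / σ ^ 2) * ((2 * (lam + δ) / (A * σ ^ 2)) *
            (∫ z in Ioi (0 : ℝ), U (z + b) * Real.exp (-z * At)) - U b)) ∧
    MonotoneOn (fun b => V'' b b) (Ici (0 : ℝ)) := by
  obtain ⟨hApos, hAtpos, hsum, hprod⟩ :=
    characteristic_roots hσ (by linarith : 0 < δ + lam) hψ hA hAt
  rw [add_comm δ] at hprod
  have hJint : ∀ b ∈ Ici (0 : ℝ), IntegrableOn (fun z => U (z + b) * exp (-z * At)) (Ioi 0) :=
    fun b hb => hUdec.integrableOn_comp_add_mul_exp_neg hAtpos hb hUC2.continuousOn hUpos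
  have hW : ∀ b ∈ Ici (0 : ℝ), -1 + A * V b b =
      2 * lam / σ ^ 2 * ∫ z in Ioi (0 : ℝ), U (z + b) * exp (-z * At) := by
    intro b hb
    rw [← hVb b hb, ← integral_const_mul]
    simp_rw [← mul_assoc]
    refine deriv_add_mul_eq_integral_of_hasDerivAt (g := fun x => 2 * lam / σ ^ 2 * U x) hAtpos
      (fun x hx => hd1 b hb x (mem_Ici.2 (hb.trans hx)))
      (fun x hx => hd2 b hb x (mem_Ici.2 (hb.trans hx))) (fun x hx => ?_)
      (by simp only [mul_assoc]; exact (hJint b hb).const_mul (2 * lam / σ ^ 2)) (hVlim b hb)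
    field_simp
    linear_combination 2 * hODE b hb x (mem_Ici.2 (hb.trans hx)) + V' b x * hsum - V b x * hprod
  have hformula : ∀ b ∈ Ici (0 : ℝ), V'' b b = 2 * μ / σ ^ 2 + 2 * (lam + δ) / (σ ^ 2 * A)
        + (2 * lam / σ ^ 2) * ((2 * (lam + δ) / (A * σ ^ 2)) *
            (∫ z in Ioi (0 : ℝ), U (z + b) * Real.exp (-z * At)) - U b) := by
    intro b hb
    have hode := hODE b hb b hb
    have hWb := hW b hb
    set J := ∫ z in Ioi (0 : ℝ), U (z + b) * exp (-z * At)
    rw [hVb b hb] at hode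
    field_simp at hWb ⊢
    linear_combination 2 * σ ^ 2 * A * hode + 2 * (lam + δ) * hWb
  refine ⟨hformula, fun b₁ hb₁ b₂ hb₂ hle => ?_⟩
  have hmono := monotoneOn_mul_integral_exp_neg_sub hAtpos hUconv hJint hb₁ hb₂ hle
  have hAt' : 2 * (lam + δ) / (A * σ ^ 2) = At := by
    rw [div_eq_iff (by positivity)]; linear_combination -hprod
  simp only [hformula b₁ hb₁, hformula b₂ hb₂, hAt']
  gcongr

theorem barrier_second_derivative_increasing
    (σ μ lam δ : ℝ) (hσ : 0 < σ) (hμ : 0 < μ) (hlam : 0 < lam) (hδ : -lam < δ)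
    (U : ℝ → ℝ)
    (hUpos : ∀ x ∈ Ici (0 : ℝ), 0 ≤ U x)
    (hUconv : ConvexOn ℝ (Ici (0 : ℝ)) U)
    (hUdec : AntitoneOn U (Ici (0 : ℝ)))
    (hUC2 : ContDiffOn ℝ 2 U (Ici (0 : ℝ)))
    (hUlim : Tendsto U atTop (nhds 0))
    (ψ A At : ℝ)
    (hψ : ψ = Real.sqrt (μ ^ 2 + 2 * σ ^ 2 * (δ + lam)))
    (hA : A = (μ + ψ) / σ ^ 2)
    (hAt : At = (-μ + ψ) / σ ^ 2)
    (V V' V'' : ℝ → ℝ → ℝ)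
    (hd1 : ∀ b ∈ Ici (0 : ℝ), ∀ x ∈ Ici (0 : ℝ), HasDerivAt (V b) (V' b x) x)
    (hd2 : ∀ b ∈ Ici (0 : ℝ), ∀ x ∈ Ici (0 : ℝ), HasDerivAt (V' b) (V'' b x) x)
    (hcont : ∀ b ∈ Ici (0 : ℝ), ContinuousOn (V'' b) (Ici (0 : ℝ)))
    (hODE : ∀ b ∈ Ici (0 : ℝ), ∀ x ∈ Ici (0 : ℝ),
      σ ^ 2 / 2 * V'' b x + μ * V' b x - (lam + δ) * V b x + lam * U x = 0)
    (hVb : ∀ b ∈ Ici (0 : ℝ), V' b b = -1)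
    (hVlim : ∀ b ∈ Ici (0 : ℝ), Tendsto (V b) atTop (nhds 0)) :
    (∀ b ∈ Ici (0 : ℝ),
      V'' b b = 2 * μ / σ ^ 2 + 2 * (lam + δ) / (σ ^ 2 * A)
        + (2 * lam / σ ^ 2) * ((2 * (lam + δ) / (A * σ ^ 2)) *
            (∫ z in Ioi (0 : ℝ), U (z + b) * Real.exp (-z * At)) - U b)) ∧
    MonotoneOn (fun b => V'' b b) (Ici (0 : ℝ)) :=
  barrier_second_derivative_increasing_general σ μ lam δ hσ hlam hδ U hUpos hUconv hUdec hUC2 ψ A At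
    hψ hA hAt V V' V'' hd1 hd2 hODE hVb hVlim
end
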